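/- arXiv:2408.11378 — 2 statements merged into one kernel-verified Lean document; each statement's English description precedes it below -/
import Mathlib

section
/- Let k be a field and let Z be a zero-dimensional closed subscheme of Pⁿ_k with d := dim_k Γ(Z, O_Z) ≤ n. Then Z is contained in a linear subvariety of Pⁿ_k of dimension d − 1. -/
theorem LinearMap.finrank_sub_finrank_le_finrank_ker {K V W : Type*} [DivisionRing K]
    [AddCommGroup V] [Module K V] [AddCommGroup W] [Module K W]
    [FiniteDimensional K V] [FiniteDimensional K W] (f : V →ₗ[K] W) :
    Module.finrank K V - Module.finrank K W ≤ Module.finrank K (LinearMap.ker f) := by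
  have := f.finrank_range_add_finrank_ker
  have := (LinearMap.range f).finrank_le
  omega

/-- `Z = Spec R` for a finite `k`-algebra `R` with `dim_k R = d`, embedded in `Pⁿ_k` by
homogeneous coordinates `a : Fin (n+1) → R` (`O(1)|_Z` is trivial as `R` is artinian). A linear
subvariety of dimension `d − 1` containing `Z` is cut out by a space `W` of linear forms of
dimension `≥ n + 1 − d`, each vanishing on `Z`. -/
theorem stmt_7_general {k : Type*} [Field k] (n d : ℕ)
    (R : Type*) [CommRing R] [Algebra k R] [Module.Finite k R]
    (hd : Module.finrank k R = d)
    (a : Fin (n + 1) → R) :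
    ∃ W : Submodule k (Fin (n + 1) → k),
      n + 1 - d ≤ Module.finrank k W ∧
      ∀ φ ∈ W, (∑ i, φ i • a i) = (0 : R) := by
  refine ⟨LinearMap.ker (Fintype.linearCombination k a), ?_, fun φ hφ => ?_⟩
  · simpa [hd] using (Fintype.linearCombination k a).finrank_sub_finrank_le_finrank_ker
  · simpa [Fintype.linearCombination_apply] using hφ

/-- A zero-dimensional closed subscheme `Z ⊂ Pⁿ_k` with `d := dim_k Γ(Z, O_Z) ≤ n`
lies on a linear subvariety of dimension `d − 1`.

Encoding: `Z = Spec R` for a finite `k`-algebra `R` with `dim_k R = d`; the embedding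
of `Z` into `Pⁿ_k` (with `O(1)|_Z` trivialised, as `Pic R = 0` for `R` artinian) is the
datum of homogeneous coordinates `a : Fin (n+1) → R` generating the unit ideal.  A linear
subvariety of dimension `d − 1` containing `Z` is the common zero locus of a space `W`
of linear forms of dimension `≥ n + 1 − d`, each vanishing on `Z`. -/
theorem stmt_7 {k : Type*} [Field k] (n d : ℕ) (hdn : d ≤ n)
    (R : Type*) [CommRing R] [Algebra k R] [Module.Finite k R]
    (hd : Module.finrank k R = d)
    (a : Fin (n + 1) → R) (ha : Ideal.span (Set.range a) = ⊤) :
    ∃ W : Submodule k (Fin (n + 1) → k),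
      n + 1 - d ≤ Module.finrank k W ∧
      ∀ φ ∈ W, (∑ i, φ i • a i) = (0 : R) :=
  stmt_7_general n d R hd a
end

section
/- Let X be a geometrically integral projective canonical weak del Pezzo surface over a field of positive characteristic with H¹(X, O_X) = 0. If N is a numerically trivial Cartier divisor on X, then N ∼ 0 (N is linearly equivalent to zero); in particular Pic(X) is a finitely generated free abelian group. -/
/-- On a geometrically integral projective canonical weak del Pezzo surface `X` (in
positive characteristic) with `H¹(X, O_X) = 0`, every numerically trivial Cartier
divisor is linearly equivalent to zero; in particular `Pic X` is a finitely generated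
free abelian group.

Encoding: `Pic` is the Picard group (so `N ∼ 0` means `N = 0`), `inter` the symmetric
biadditive intersection pairing, `K` the canonical class, `h0, h1, h2` the dimensions of
coherent cohomology of the corresponding line bundles.  The weak del Pezzo condition is
`−K` nef and `K² > 0`; `H¹(O_X) = 0` is `h1 0 = 0`; `hRR` is Riemann–Roch (with
`χ(O_X) = 1`), `hserre` is Serre duality, `hnef_eff` says effective classes pair
nonnegatively with nef classes, and `heff` says a class that is both effective and
anti-effective is trivial.  Finite generation of `Pic = NS` is the Néron–Severi
theorem. -/
theorem stmt_12 (Pic : Type*) [AddCommGroup Pic] [Module.Finite ℤ Pic]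
    (inter : Pic → Pic → ℤ)
    (hsymm : ∀ a b, inter a b = inter b a)
    (haddl : ∀ a b c, inter (a + b) c = inter a c + inter b c)
    (K : Pic) (h0 h1 h2 : Pic → ℕ)
    (Nef : Pic → Prop)
    (hnefK : Nef (-K)) (hbigK : 0 < inter K K)
    (hH1 : h1 0 = 0)
    (hRR : ∀ D, 2 * ((h0 D : ℤ) - (h1 D : ℤ) + (h2 D : ℤ)) = 2 + inter D (D - K))
    (hserre : ∀ D, h2 D = h0 (K - D))
    (hnef_eff : ∀ D E, Nef D → 1 ≤ h0 E → 0 ≤ inter D E)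
    (heff : ∀ D, 1 ≤ h0 D → 1 ≤ h0 (-D) → D = 0)
    (N : Pic) (hN : ∀ D, inter N D = 0) :
    N = 0 ∧ Module.Free ℤ Pic := by
  -- basic bilinearity consequences
  have inter0 : ∀ c, inter 0 c = 0 := by
    intro c
    have := haddl 0 0 c
    simp at this
    linarith [this]
  have interneg : ∀ a c, inter (-a) c = -inter a c := by
    intro a c
    have := haddl a (-a) c
    simp [inter0] at this
    linarith
  have intersub : ∀ a b c, inter (a - b) c = inter a c - inter b c := by
    intro a b c
    rw [sub_eq_add_neg, haddl, interneg]; ring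
  -- key: any numerically trivial class is effective
  have pos : ∀ M : Pic, (∀ D, inter M D = 0) → 1 ≤ h0 M := by
    intro M hM
    have h2z : h2 M = 0 := by
      rw [hserre]
      by_contra h
      have h1' : 1 ≤ h0 (K - M) := Nat.one_le_iff_ne_zero.mpr h
      have := hnef_eff (-K) (K - M) hnefK h1'
      have hcalc : inter (-K) (K - M) = -inter K K := by
        rw [hsymm, intersub, hsymm K (-K), interneg, hsymm M (-K), interneg,
          hsymm K M]
        have := hM K
        linarith
      rw [hcalc] at this
      linarith
    have hrr := hRR M
    rw [hM (M - K), h2z] at hrr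
    push_cast at hrr
    omega
  have hN0 : N = 0 := by
    refine heff N (pos N hN) (pos (-N) ?_)
    intro D
    rw [interneg, hN, neg_zero]
  refine ⟨hN0, ?_⟩
  have : NoZeroSMulDivisors ℤ Pic := by
    constructor
    intro c x hcx
    by_cases hc : c = 0
    · exact Or.inl hc
    · right
      have hx : ∀ D, inter x D = 0 := by
        intro D
        let f : Pic →+ ℤ := AddMonoidHom.mk' (fun a => inter a D) (fun a b => haddl a b D)
        have : f (c • x) = c • f x := map_zsmul f c x
        rw [hcx, map_zero] at this
        have : c * inter x D = 0 := by simpa [f, smul_eq_mul] using this.symm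
        exact (mul_eq_zero.mp this).resolve_left hc
      refine heff x (pos x hx) (pos (-x) ?_)
      intro D; rw [interneg, hx, neg_zero]
  exact Module.free_of_finite_type_torsion_free'
end
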